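/- arXiv:2403.15790 — 2 statements merged into one kernel-verified Lean document; each statement's English description precedes it below -/
import Mathlib

section
/- Let n be a positive natural number and let x, x̂ : Fin n → ({0,1} ⊆ ℝ) be binary vectors with n₁ = #{i | x i = 1} satisfying 0 < n₁ < n. Define TP = #{i | x i = 1 ∧ x̂ i = 1}, TN = #{i | x i = 0 ∧ x̂ i = 0}, FP = #{i | x i = 0 ∧ x̂ i = 1}, FN = #{i | x i = 1 ∧ x̂ i = 0}, and the balanced accuracy BalAcc(x, x̂) = (1/2)·(TP/(TP + FN) + TN/(TN + FP)). Then (1/2)·[ (1/n₁) · Σ_{i : x i = 1} (x i − x̂ i)² + (1/(n − n₁)) · Σ_{i : x i = 0} (x i − x̂ i)² ] = 1 − BalAcc(x, x̂). -/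
open Finset

/-- Proposition 2 (rebalanced MSE* – balanced accuracy equivalence): for binary
`x, xhat : Fin n → ℝ` with `n₁` ones in `x` and `0 < n₁ < n`, the per-observation
rebalanced error `(1/2)·[(1/n₁)·Σ_{x i = 1}(x i − xhat i)² + (1/(n−n₁))·Σ_{x i = 0}(x i − xhat i)²]`
equals `1 − BalAcc(x, xhat)` with
`BalAcc = (1/2)·(TP/(TP+FN) + TN/(TN+FP))`. -/
theorem rebalanced_mse_eq_one_sub_balanced_accuracy (n : ℕ) (hn : 0 < n)
    (x xhat : Fin n → ℝ)
    (hx : ∀ i, x i = 0 ∨ x i = 1)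
    (hxhat : ∀ i, xhat i = 0 ∨ xhat i = 1)
    (n₁ : ℕ) (hn₁ : n₁ = (Finset.univ.filter (fun i => x i = 1)).card)
    (hpos : 0 < n₁) (hlt : n₁ < n)
    (TP TN FP FN : ℕ)
    (hTP : TP = (Finset.univ.filter (fun i => x i = 1 ∧ xhat i = 1)).card)
    (hTN : TN = (Finset.univ.filter (fun i => x i = 0 ∧ xhat i = 0)).card)
    (hFP : FP = (Finset.univ.filter (fun i => x i = 0 ∧ xhat i = 1)).card)
    (hFN : FN = (Finset.univ.filter (fun i => x i = 1 ∧ xhat i = 0)).card) :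
    (1 / 2 : ℝ) * ((1 / (n₁ : ℝ)) * ∑ i ∈ Finset.univ.filter (fun i => x i = 1), (x i - xhat i) ^ 2
        + (1 / ((n : ℝ) - n₁)) * ∑ i ∈ Finset.univ.filter (fun i => x i = 0), (x i - xhat i) ^ 2)
      = 1 - (1 / 2 : ℝ) * ((TP : ℝ) / ((TP : ℝ) + FN) + (TN : ℝ) / ((TN : ℝ) + FP)) := by
  -- sum over ones equals FN
  have hsum1 : ∑ i ∈ Finset.univ.filter (fun i => x i = 1), (x i - xhat i) ^ 2 = (FN : ℝ) := by
    rw [hFN]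
    have : (Finset.univ.filter (fun i => x i = 1 ∧ xhat i = 0))
        = (Finset.univ.filter (fun i => x i = 1)).filter (fun i => xhat i = 0) := by
      rw [Finset.filter_filter]
    rw [this, Finset.card_filter]
    push_cast
    refine Finset.sum_congr rfl ?_
    intro i hi
    simp only [Finset.mem_filter] at hi
    rcases hxhat i with h | h <;> simp [h, hi.2]
  have hsum0 : ∑ i ∈ Finset.univ.filter (fun i => x i = 0), (x i - xhat i) ^ 2 = (FP : ℝ) := by
    rw [hFP]
    have : (Finset.univ.filter (fun i => x i = 0 ∧ xhat i = 1))
        = (Finset.univ.filter (fun i => x i = 0)).filter (fun i => xhat i = 1) := by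
      rw [Finset.filter_filter]
    rw [this, Finset.card_filter]
    push_cast
    refine Finset.sum_congr rfl ?_
    intro i hi
    simp only [Finset.mem_filter] at hi
    rcases hxhat i with h | h <;> simp [h, hi.2]
  -- TP + FN = n₁
  have h2 : TP + FN = n₁ := by
    rw [hTP, hFN, hn₁, ← Finset.card_union_of_disjoint, ← Finset.filter_or]
    · congr 1
      apply Finset.filter_congr
      intro i _
      rcases hxhat i with h | h <;> simp [h]
    · rw [Finset.disjoint_left]
      intro i hi hj
      simp only [Finset.mem_filter] at hi hj
      rw [hi.2.2] at hj
      exact one_ne_zero hj.2.2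
  -- TN + FP = n - n₁
  have h3 : TN + FP = n - n₁ := by
    have hcompl : (Finset.univ.filter (fun i => x i = 0))
        = (Finset.univ.filter (fun i => ¬ x i = 1)) := by
      apply Finset.filter_congr
      intro i _
      rcases hx i with h | h <;> simp [h]
    have hcard : (Finset.univ.filter (fun i => x i = 1)).card
        + (Finset.univ.filter (fun i => ¬ x i = 1)).card = n := by
      rw [Finset.card_filter_add_card_filter_not]
      simp
    rw [hTN, hFP, ← Finset.card_union_of_disjoint, ← Finset.filter_or]
    · have : (Finset.univ.filter (fun i => (x i = 0 ∧ xhat i = 0) ∨ (x i = 0 ∧ xhat i = 1))).card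
          = (Finset.univ.filter (fun i => x i = 0)).card := by
        congr 1
        apply Finset.filter_congr
        intro i _
        rcases hxhat i with h | h <;> simp [h]
      rw [this, hcompl]
      omega
    · rw [Finset.disjoint_left]
      intro i hi hj
      simp only [Finset.mem_filter] at hi hj
      rw [hi.2.2] at hj
      exact zero_ne_one hj.2.2
  rw [hsum1, hsum0]
  have hA : (TP : ℝ) + FN = (n₁ : ℝ) := by exact_mod_cast congrArg Nat.cast h2
  have hB : (TN : ℝ) + FP = (n : ℝ) - n₁ := by
    have : (TN + FP : ℕ) = n - n₁ := h3
    have h' : ((TN + FP : ℕ) : ℝ) = ((n - n₁ : ℕ) : ℝ) := by exact_mod_cast congrArg Nat.cast this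
    push_cast [Nat.cast_sub hlt.le] at h'
    exact h'
  have hApos : (0:ℝ) < (n₁ : ℝ) := by exact_mod_cast hpos
  have hBpos : (0:ℝ) < (n : ℝ) - n₁ := by
    have : (n₁ : ℝ) < n := by exact_mod_cast hlt
    linarith
  rw [hA, hB]
  have hTPe : (TP : ℝ) = (n₁ : ℝ) - FN := by linarith
  have hTNe : (TN : ℝ) = ((n : ℝ) - n₁) - FP := by linarith
  rw [hTPe, hTNe]
  field_simp
  ring
end

section
/- Let n and p be positive natural numbers. Suppose (i) y, ŷ : Fin n → ℝ represent a numerical variable and its reconstruction with (y i − ŷ i)² ≤ 1 for all i, and (ii) X : Fin n → Fin p → ({0,1} ⊆ ℝ) is the one-hot encoding of a categorical variable with p modalities, with column counts n_k = #{i | X i k = 1} satisfying 0 < n_k < n, and X̂ : Fin n → Fin p → ℝ its reconstruction with (X i k − X̂ i k)² ≤ 1 for all i, k. Then both the numerical variable's sum of squared errors Σ_i (y i − ŷ i)² and the categorical variable's balanced SSE Σ_{k} [ (n/(2·p·n_k)) · Σ_{i : X i k = 1} (X i k − X̂ i k)² + (n/(2·p·(n − n_k))) · Σ_{i : X i k =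 0} (X i k − X̂ i k)² ] lie in the interval [0, n]. -/
open Finset

/-- Proposition 3 (balancing numerical and categorical variables): under the assumption that
all squared errors are at most 1, both the numerical variable's sum of squared errors
`Σ_i (y i − yhat i)²` and the categorical variable's balanced SSE
`Σ_k [ (n/(2·p·n_k))·Σ_{X i k = 1}(X i k − Xhat i k)²
      + (n/(2·p·(n−n_k)))·Σ_{X i k = 0}(X i k − Xhat i k)² ]` lie in `[0, n]`. -/
theorem balanced_sse_balances_numerical_and_categorical (n p : ℕ) (hn : 0 < n) (hp : 0 < p)
    (y yhat : Fin n → ℝ) (hy : ∀ i, (y i - yhat i) ^ 2 ≤ 1)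
    (X : Fin n → Fin p → ℝ) (hX : ∀ i k, X i k = 0 ∨ X i k = 1)
    (hone_hot : ∀ i, ∑ k, X i k = 1)
    (nk : Fin p → ℕ) (hnk : ∀ k, nk k = (Finset.univ.filter (fun i => X i k = 1)).card)
    (hpos : ∀ k, 0 < nk k) (hlt : ∀ k, nk k < n)
    (Xhat : Fin n → Fin p → ℝ) (herr : ∀ i k, (X i k - Xhat i k) ^ 2 ≤ 1) :
    (0 ≤ ∑ i, (y i - yhat i) ^ 2 ∧ ∑ i, (y i - yhat i) ^ 2 ≤ n)
    ∧ (0 ≤ ∑ k, (((n : ℝ) / (2 * p * nk k))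
            * ∑ i ∈ Finset.univ.filter (fun i => X i k = 1), (X i k - Xhat i k) ^ 2
          + ((n : ℝ) / (2 * p * ((n : ℝ) - nk k)))
            * ∑ i ∈ Finset.univ.filter (fun i => X i k = 0), (X i k - Xhat i k) ^ 2)
      ∧ ∑ k, (((n : ℝ) / (2 * p * nk k))
            * ∑ i ∈ Finset.univ.filter (fun i => X i k = 1), (X i k - Xhat i k) ^ 2
          + ((n : ℝ) / (2 * p * ((n : ℝ) - nk k)))
            * ∑ i ∈ Finset.univ.filter (fun i => X i k = 0), (X i k - Xhat i k) ^ 2) ≤ n) := by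
  have hnum1 : (0:ℝ) ≤ ∑ i, (y i - yhat i) ^ 2 :=
    Finset.sum_nonneg fun i _ => sq_nonneg _
  have hnum2 : ∑ i, (y i - yhat i) ^ 2 ≤ (n:ℝ) := by
    calc ∑ i, (y i - yhat i) ^ 2 ≤ ∑ i : Fin n, (1:ℝ) :=
          Finset.sum_le_sum fun i _ => hy i
      _ = n := by simp
  refine ⟨⟨hnum1, hnum2⟩, ?_, ?_⟩
  · refine Finset.sum_nonneg fun k _ => ?_
    have h1 : (0:ℝ) ≤ (n : ℝ) / (2 * p * nk k) := by positivity
    have h2 : (0:ℝ) ≤ (n : ℝ) / (2 * p * ((n:ℝ) - nk k)) := by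
      apply div_nonneg (by positivity)
      have : (nk k : ℝ) < n := by exact_mod_cast hlt k
      have : (0:ℝ) ≤ (n:ℝ) - nk k := by linarith
      positivity
    have s1 : (0:ℝ) ≤ ∑ i ∈ Finset.univ.filter (fun i => X i k = 1), (X i k - Xhat i k) ^ 2 :=
      Finset.sum_nonneg fun i _ => sq_nonneg _
    have s2 : (0:ℝ) ≤ ∑ i ∈ Finset.univ.filter (fun i => X i k = 0), (X i k - Xhat i k) ^ 2 :=
      Finset.sum_nonneg fun i _ => sq_nonneg _
    have := mul_nonneg h1 s1
    have := mul_nonneg h2 s2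
    linarith
  · have key : ∀ k : Fin p,
        ((n:ℝ) / (2 * p * nk k))
            * ∑ i ∈ Finset.univ.filter (fun i => X i k = 1), (X i k - Xhat i k) ^ 2
          + ((n:ℝ) / (2 * p * ((n:ℝ) - nk k)))
            * ∑ i ∈ Finset.univ.filter (fun i => X i k = 0), (X i k - Xhat i k) ^ 2
        ≤ (n:ℝ) / p := by
      intro k
      have hcard0 : (Finset.univ.filter (fun i => X i k = 0)).card = n - nk k := by
        have hcompl : Finset.univ.filter (fun i => X i k = 0)
            = (Finset.univ.filter (fun i => X i k = 1))ᶜ := by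
          ext i
          rcases hX i k with h | h <;> simp [h]
        rw [hcompl, Finset.card_compl, hnk k]
        simp
      have hnkpos : (0:ℝ) < (nk k : ℝ) := by exact_mod_cast hpos k
      have hnklt : (nk k : ℝ) < n := by exact_mod_cast hlt k
      have hppos : (0:ℝ) < (p:ℝ) := by exact_mod_cast hp
      have b1 : ∑ i ∈ Finset.univ.filter (fun i => X i k = 1), (X i k - Xhat i k) ^ 2
          ≤ (nk k : ℝ) := by
        calc _ ≤ ∑ i ∈ Finset.univ.filter (fun i => X i k = 1), (1:ℝ) :=
              Finset.sum_le_sum fun i _ => herr i k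
          _ = (nk k : ℝ) := by rw [Finset.sum_const, hnk k]; simp
      have b2 : ∑ i ∈ Finset.univ.filter (fun i => X i k = 0), (X i k - Xhat i k) ^ 2
          ≤ (n:ℝ) - nk k := by
        calc _ ≤ ∑ i ∈ Finset.univ.filter (fun i => X i k = 0), (1:ℝ) :=
              Finset.sum_le_sum fun i _ => herr i k
          _ = ((n - nk k : ℕ) : ℝ) := by rw [Finset.sum_const, hcard0]; simp
          _ = (n:ℝ) - nk k := by
              rw [Nat.cast_sub (le_of_lt (hlt k))]
      have h1 : (0:ℝ) ≤ (n : ℝ) / (2 * p * nk k) := by positivity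
      have h2 : (0:ℝ) ≤ (n : ℝ) / (2 * p * ((n:ℝ) - nk k)) := by
        apply div_nonneg (by positivity); nlinarith
      have e1 : ((n:ℝ) / (2 * p * nk k)) * (nk k : ℝ) = (n:ℝ) / (2 * p) := by
        field_simp
      have e2 : ((n:ℝ) / (2 * p * ((n:ℝ) - nk k))) * ((n:ℝ) - nk k) = (n:ℝ) / (2 * p) := by
        have : (n:ℝ) - nk k ≠ 0 := by linarith
        field_simp
      have t1 := mul_le_mul_of_nonneg_left b1 h1
      have t2 := mul_le_mul_of_nonneg_left b2 h2
      rw [e1] at t1; rw [e2] at t2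
      have : (n:ℝ) / (2*p) + (n:ℝ) / (2*p) = (n:ℝ)/p := by field_simp; ring
      linarith
    calc _ ≤ ∑ _k : Fin p, (n:ℝ)/p := Finset.sum_le_sum fun k _ => key k
      _ = (n:ℝ) := by
          rw [Finset.sum_const]
          simp
          field_simp
end
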